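/- arXiv:0908.3185 — 2 statements merged into one kernel-verified Lean document; each statement's English description precedes it below -/
import Mathlib

section
/- Let C be a submodule of (Z/2kZ)^n that is self-dual with respect to the standard inner product (i.e., C equals its dual C^perp = {x : x·y = 0 for all y in C}). Then for every codeword c in C, the sum of the squares of the signed representatives rho(c_i) is divisible by 2k. -/
/-!
Since `ρ(a) ≡ a (mod 2k)`, the Euclidean weight of `c` reduces modulo `2k` to `c · c`, which
vanishes because a self-dual code is self-orthogonal.
-/

/-- The signed representative map `ρ : ℤ/2kℤ → ℤ`. -/
def signedRep (k : ℕ) (a : ZMod (2 * k)) : ℤ :=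
  if a.val ≤ k then (a.val : ℤ) else (a.val : ℤ) - 2 * k

theorem intCast_signedRep {k : ℕ} [NeZero k] (a : ZMod (2 * k)) :
    ((signedRep k a : ℤ) : ZMod (2 * k)) = a := by
  unfold signedRep
  split_ifs
  · simp
  · push_cast
    rw [show ((2 : ZMod (2 * k)) * k) = ((2 * k : ℕ) : ZMod (2 * k)) by push_cast; rfl,
      ZMod.natCast_self]
    simp

theorem intCast_signedRep_sq (k : ℕ) (a : ZMod (2 * k)) :
    ((signedRep k a ^ 2 : ℤ) : ZMod (2 * k)) = a ^ 2 := by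
  rcases Nat.eq_zero_or_pos k with rfl | hk
  -- For `k = 0`, `ZMod 0 = ℤ` and `ZMod.val = Int.natAbs`, so `ρ a = |a|` is `a` only up to sign.
  · simp only [signedRep, ZMod.val, CharP.cast_eq_zero, mul_zero, sub_zero, ite_self]
    exact Int.natAbs_sq a
  · have : NeZero k := ⟨hk.ne'⟩
    rw [Int.cast_pow, intCast_signedRep]

theorem two_mul_dvd_sum_signedRep_sq_iff {ι : Type*} [Fintype ι] (k : ℕ)
    (c : ι → ZMod (2 * k)) :
    (2 * (k : ℤ)) ∣ ∑ i, signedRep k (c i) ^ 2 ↔ ∑ i, c i ^ 2 = 0 := by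
  rw [← Nat.cast_ofNat, ← Nat.cast_mul, ← ZMod.intCast_zmod_eq_zero_iff_dvd, Int.cast_sum]
  simp only [intCast_signedRep_sq]

theorem euclidean_weight_of_selfdual_div_2k_general
    (k n : ℕ)
    (C : Submodule (ZMod (2 * k)) (Fin n → ZMod (2 * k)))
    (hself : ∀ x : Fin n → ZMod (2 * k),
      x ∈ C ↔ ∀ y ∈ C, ∑ i, x i * y i = 0) :
    ∀ c ∈ C, (2 * (k : ℤ)) ∣ ∑ i, (signedRep k (c i)) ^ 2 := by
  intro c hc
  rw [two_mul_dvd_sum_signedRep_sq_iff]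
  simpa only [sq] using (hself c).mp hc c hc

theorem euclidean_weight_of_selfdual_div_2k
    (k n : ℕ) (hk : 0 < k)
    (C : Submodule (ZMod (2 * k)) (Fin n → ZMod (2 * k)))
    (hself : ∀ x : Fin n → ZMod (2 * k),
      x ∈ C ↔ ∀ y ∈ C, ∑ i, x i * y i = 0) :
    ∀ c ∈ C, (2 * (k : ℤ)) ∣ ∑ i, (signedRep k (c i)) ^ 2 :=
  euclidean_weight_of_selfdual_div_2k_general k n C hself
end

section
/- Let C be a self-dual Z/2kZ-code of length n such that every codeword has Euclidean weight divisible by 4k (i.e., C is Type II). Then every vector of the Construction A lattice A_{2k}(C) has even norm; that is, A_{2k}(C) is an even lattice. -/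
/-- The Construction A lattice `A_{2k}(C) = (1/√(2k))(ρ(C) + 2kℤⁿ)`. -/
def constructionA (k n : ℕ) (C : Submodule (ZMod (2 * k)) (Fin n → ZMod (2 * k))) :
    Set (Fin n → ℝ) :=
  {v | ∃ c ∈ C, ∃ z : Fin n → ℤ,
    v = fun i => ((signedRep k (c i) : ℝ) + 2 * k * z i) / Real.sqrt (2 * k)}

/-!
Write a vector of `A_{2k}(C)` as `(ρ(c) + 2kz)/√(2k)`. Its norm is `Σ (ρ(cᵢ) + 2kzᵢ)² / (2k)`.
Expanding the squares, `Σ (ρ(cᵢ) + 2kzᵢ)² ≡ Σ ρ(cᵢ)² (mod 4k)`, and `ρ(cᵢ)²` is exactly the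
Euclidean weight `min(cᵢ², (2k - cᵢ)²)` of the coordinate, so the Type II condition makes the
numerator divisible by `4k` and the norm an even integer.
-/

open Finset

lemma signedRep_sq {k : ℕ} (hk : 0 < k) (a : ZMod (2 * k)) :
    signedRep k a ^ 2 = min ((a.val : ℤ) ^ 2) ((2 * (k : ℤ) - a.val) ^ 2) := by
  have : NeZero (2 * k) := ⟨by omega⟩
  have hlt : (a.val : ℤ) < 2 * k := by exact_mod_cast ZMod.val_lt a
  have hnonneg : (0 : ℤ) ≤ a.val := Int.natCast_nonneg _
  unfold signedRep
  split_ifs with h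
  · have h' : (a.val : ℤ) ≤ k := by exact_mod_cast h
    rw [min_eq_left (by nlinarith)]
  · have h' : (k : ℤ) < a.val := by exact_mod_cast Nat.lt_of_not_le h
    rw [min_eq_right (by nlinarith)]
    ring

lemma dvd_sum_sq_add_two_mul {ι : Type*} (s : Finset ι) (r z : ι → ℤ) {k : ℤ}
    (h : 4 * k ∣ ∑ i ∈ s, r i ^ 2) : 4 * k ∣ ∑ i ∈ s, (r i + 2 * k * z i) ^ 2 := by
  have hexpand : ∑ i ∈ s, (r i + 2 * k * z i) ^ 2
      = ∑ i ∈ s, r i ^ 2 + 4 * k * ∑ i ∈ s, (z i * r i + k * z i ^ 2) := by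
    rw [mul_sum, ← sum_add_distrib]
    exact sum_congr rfl fun i _ => by ring
  rw [hexpand]
  exact dvd_add h (dvd_mul_right _ _)

lemma sum_div_sqrt_mul_self {ι : Type*} (s : Finset ι) (x : ι → ℝ) {d : ℝ} (hd : 0 ≤ d) :
    ∑ i ∈ s, x i / √d * (x i / √d) = (∑ i ∈ s, x i ^ 2) / d := by
  rw [sum_div]
  exact sum_congr rfl fun i _ => by rw [div_mul_div_comm, Real.mul_self_sqrt hd, sq]

theorem constructionA_even_of_typeII_general
    (k n : ℕ) (hk : 0 < k)
    (C : Submodule (ZMod (2 * k)) (Fin n → ZMod (2 * k)))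
    (htypeII : ∀ c ∈ C, (4 * (k : ℤ)) ∣
      ∑ i, min (((c i).val : ℤ) ^ 2) ((2 * (k : ℤ) - (c i).val) ^ 2)) :
    ∀ v ∈ constructionA k n C, ∃ m : ℤ, ∑ i, v i * v i = 2 * m := by
  rintro v ⟨c, hc, z, rfl⟩
  have hweight : 4 * (k : ℤ) ∣ ∑ i, signedRep k (c i) ^ 2 := by
    simpa only [signedRep_sq hk] using htypeII c hc
  obtain ⟨m, hm⟩ := dvd_sum_sq_add_two_mul univ _ z hweight
  refine ⟨m, ?_⟩
  have hm' : ∑ i, ((signedRep k (c i) : ℝ) + 2 * k * z i) ^ 2 = 4 * (k : ℝ) * m := by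
    exact_mod_cast congrArg (Int.cast : ℤ → ℝ) hm
  have hk' : (0 : ℝ) < k := by exact_mod_cast hk
  rw [sum_div_sqrt_mul_self _ _ (by positivity), hm']
  field_simp
  ring

theorem constructionA_even_of_typeII
    (k n : ℕ) (hk : 0 < k)
    (C : Submodule (ZMod (2 * k)) (Fin n → ZMod (2 * k)))
    (hself : ∀ x : Fin n → ZMod (2 * k),
      x ∈ C ↔ ∀ y ∈ C, ∑ i, x i * y i = 0)
    (htypeII : ∀ c ∈ C, (4 * (k : ℤ)) ∣
      ∑ i, min (((c i).val : ℤ) ^ 2) ((2 * (k : ℤ) - (c i).val) ^ 2)) :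
    ∀ v ∈ constructionA k n C, ∃ m : ℤ, ∑ i, v i * v i = 2 * m :=
  constructionA_even_of_typeII_general k n hk C htypeII
end
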